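/- arXiv:1602.08998 — 9 statements merged into one kernel-verified Lean document; each statement's English description precedes it below -/
import Mathlib

section
/- If I is a monomial ideal of A such that M(I) is finite and nonempty, then the survival complex of A/I has an isolated point: there exists a ∈ M(I) such that X^{a+b} ∈ I for every b ∈ M(I) with b ≠ a. -/
/-! A survivor `a` of maximal total degree is isolated: for a nonzero exponent `b`, the vector
`a + b` is nonzero of strictly larger degree, so it cannot survive, i.e. `X^(a+b) ∈ I`. -/

open MvPolynomial

/-- An ideal of `k[X_1,…,X_n]` is a *monomial ideal* if it is generated by a set
of monomials. -/
def IsMonomialIdeal {k : Type*} [Field k] {n : ℕ}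
    (I : Ideal (MvPolynomial (Fin n) k)) : Prop :=
  ∃ S : Set ((Fin n) →₀ ℕ),
    I = Ideal.span ((fun a => (monomial a (1 : k) : MvPolynomial (Fin n) k)) '' S)

/-- `M(I)`: the set of nonzero exponent vectors whose monomial survives in `A/I`;
these are the vertices of the survival complex. -/
def survivors {k : Type*} [Field k] {n : ℕ}
    (I : Ideal (MvPolynomial (Fin n) k)) : Set ((Fin n) →₀ ℕ) :=
  {a | a ≠ 0 ∧ monomial a (1 : k) ∉ I}

theorem Finsupp.degree_lt_degree_add {σ : Type*} {a b : σ →₀ ℕ} (hb : b ≠ 0) :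
    a.degree < (a + b).degree := by
  rw [map_add]
  exact Nat.lt_add_of_pos_right (Nat.pos_of_ne_zero ((Finsupp.degree_eq_zero_iff b).not.mpr hb))

theorem monomial_add_mem_of_maximalFor_degree {k : Type*} [Field k] {n : ℕ}
    {I : Ideal (MvPolynomial (Fin n) k)} {a b : Fin n →₀ ℕ}
    (ha : MaximalFor (· ∈ survivors I) Finsupp.degree a) (hb : b ≠ 0) :
    monomial (a + b) (1 : k) ∈ I := by
  by_contra h
  have hab : a + b ∈ survivors I := ⟨fun h0 => ha.1.1 (add_eq_zero.mp h0).1, h⟩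
  have hlt : a.degree < (a + b).degree := Finsupp.degree_lt_degree_add hb
  exact hlt.not_ge (ha.2 hab hlt.le)

theorem survival_complex_has_isolated_point_general
    {k : Type*} [Field k] {n : ℕ}
    (I : Ideal (MvPolynomial (Fin n) k))
    (hfin : (survivors I).Finite) (hne : (survivors I).Nonempty) :
    ∃ a ∈ survivors I, ∀ b ∈ survivors I, b ≠ a →
      monomial (a + b) (1 : k) ∈ I := by
  obtain ⟨a, ha⟩ := hfin.exists_maximalFor Finsupp.degree _ hne
  exact ⟨a, ha.1, fun b hb _ => monomial_add_mem_of_maximalFor_degree ha hb.1⟩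

/-- If `I` is a monomial ideal with `M(I)` finite and nonempty, then the survival
complex of `A/I` has an isolated point. -/
theorem survival_complex_has_isolated_point
    {k : Type*} [Field k] {n : ℕ} (hn : 1 ≤ n)
    (I : Ideal (MvPolynomial (Fin n) k)) (hI : IsMonomialIdeal I)
    (hfin : (survivors I).Finite) (hne : (survivors I).Nonempty) :
    ∃ a ∈ survivors I, ∀ b ∈ survivors I, b ≠ a →
      monomial (a + b) (1 : k) ∈ I :=
  survival_complex_has_isolated_point_general I hfin hne
end

section
/- Let m : Fin n → ℕ satisfy m_i ≥ 2 for every i, and let I be the (pure power) ideal generated by X_1^{m_1},…,X_n^{m_n}. Then the survival complex of A/I has exactly one truly isolated point: an exponent vector a satisfies X^a ∉ I and X_i·X^a ∈ I for all i if and only if a_i = m_i − 1 for every i. -/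
/-!
A monomial `X^b` lies in the ideal generated by the pure powers `X_i^{m_i}` exactly when
`m_i ≤ b_i` for some `i`. So `X^a ∉ I` means `a < m` coordinatewise, and then `X_i X^a ∈ I`
can only happen through the `i`-th generator, i.e. `a_i + 1 = m_i`.
-/

open MvPolynomial

theorem monomial_one_mem_span_X_pow_iff {σ R : Type*} [CommSemiring R] [Nontrivial R]
    (m : σ → ℕ) (b : σ →₀ ℕ) :
    monomial b (1 : R) ∈ Ideal.span (Set.range fun i => (X i : MvPolynomial σ R) ^ m i) ↔
      ∃ i, m i ≤ b i := by
  classical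
  have hgen : (Set.range fun i => (X i : MvPolynomial σ R) ^ m i) =
      (fun s => monomial s (1 : R)) '' Set.range fun i => Finsupp.single i (m i) := by
    simp only [X_pow_eq_monomial, ← Set.range_comp, Function.comp_def]
  rw [hgen, mem_ideal_span_monomial_image, support_monomial, if_neg one_ne_zero]
  simp [Finsupp.single_le_iff]

theorem exists_le_add_single_iff {σ : Type*} {m : σ → ℕ} {a : σ →₀ ℕ}
    (hlt : ∀ j, a j < m j) (i : σ) :
    (∃ j, m j ≤ (a + Finsupp.single i 1 : σ →₀ ℕ) j) ↔ a i + 1 = m i := by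
  constructor
  · rintro ⟨j, hj⟩
    rcases eq_or_ne j i with rfl | hji
    · rw [Finsupp.add_apply, Finsupp.single_eq_same] at hj
      exact le_antisymm (hlt j) hj
    · rw [Finsupp.add_apply, Finsupp.single_eq_of_ne' hji.symm, add_zero] at hj
      exact absurd hj (hlt j).not_ge
  · intro h
    exact ⟨i, by rw [Finsupp.add_apply, Finsupp.single_eq_same, h]⟩

theorem purePower_unique_truly_isolated_general
    {k : Type*} [Field k] {n : ℕ}
    (m : Fin n → ℕ) (hm : ∀ i, 2 ≤ m i)
    (I : Ideal (MvPolynomial (Fin n) k))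
    (hI : I = Ideal.span (Set.range fun i : Fin n => (X i : MvPolynomial (Fin n) k) ^ m i))
    (a : (Fin n) →₀ ℕ) :
    (monomial a (1 : k) ∉ I ∧ ∀ i : Fin n, X i * monomial a (1 : k) ∈ I) ↔
      ∀ i : Fin n, a i = m i - 1 := by
  subst hI
  have hX (i : Fin n) : (X i : MvPolynomial (Fin n) k) * monomial a 1 =
      monomial (a + Finsupp.single i 1) 1 := by
    rw [X, monomial_mul, one_mul, add_comm]
  simp only [hX, monomial_one_mem_span_X_pow_iff, not_exists, not_le]
  constructor
  · rintro ⟨hlt, hmul⟩ i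
    have := (exists_le_add_single_iff hlt i).1 (hmul i)
    omega
  · intro ha
    have hlt (j : Fin n) : a j < m j := by have := hm j; have := ha j; omega
    refine ⟨hlt, fun i => (exists_le_add_single_iff hlt i).2 ?_⟩
    have := hm i
    rw [ha i]
    omega

/-- For a pure power ideal `I = (X_1^{m_1},…,X_n^{m_n})` with all `m_i ≥ 2`, the
survival complex of `A/I` has exactly one truly isolated point, namely the
exponent vector `a` with `a_i = m_i − 1` for all `i`. -/
theorem purePower_unique_truly_isolated
    {k : Type*} [Field k] {n : ℕ} (hn : 1 ≤ n)
    (m : Fin n → ℕ) (hm : ∀ i, 2 ≤ m i)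
    (I : Ideal (MvPolynomial (Fin n) k))
    (hI : I = Ideal.span (Set.range fun i : Fin n => (X i : MvPolynomial (Fin n) k) ^ m i))
    (a : (Fin n) →₀ ℕ) :
    (monomial a (1 : k) ∉ I ∧ ∀ i : Fin n, X i * monomial a (1 : k) ∈ I) ↔
      ∀ i : Fin n, a i = m i - 1 :=
  purePower_unique_truly_isolated_general m hm I hI a
end

section
/- Let m : Fin n → ℕ satisfy m_i ≥ 2 for every i, and let I be the pure power ideal generated by X_1^{m_1},…,X_n^{m_n}. Then there exists an index t such that X_t is quasi-isolated (i.e. X_t^2 ∉ I, X_t^3 ∈ I, and X_i·X_t ∈ I for all i ≠ t) if and only if n = 1 and m_1 = 3. In other words, k[x]/(x^3) gives the only pure power survival complex containing a quasi-isolated point. -/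
open MvPolynomial

/-- For a pure power ideal `I = (X_1^{m_1},…,X_n^{m_n})` with all `m_i ≥ 2`, the
survival complex of `A/I` contains a quasi-isolated point if and only if `n = 1`
and `m_1 = 3`, i.e. `k[x]/(x^3)` is the only pure power ring whose survival
complex has a quasi-isolated point. -/
theorem purePower_quasi_isolated_iff
    {k : Type*} [Field k] {n : ℕ} (hn : 1 ≤ n)
    (m : Fin n → ℕ) (hm : ∀ i, 2 ≤ m i)
    (I : Ideal (MvPolynomial (Fin n) k))
    (hI : I = Ideal.span (Set.range fun i : Fin n => (X i : MvPolynomial (Fin n) k) ^ m i)) :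
    (∃ t : Fin n,
        (X t : MvPolynomial (Fin n) k) ^ 2 ∉ I ∧
        (X t : MvPolynomial (Fin n) k) ^ 3 ∈ I ∧
        ∀ i : Fin n, i ≠ t → (X i : MvPolynomial (Fin n) k) * X t ∈ I) ↔
      (n = 1 ∧ ∀ i : Fin n, m i = 3) := by
  have key : ∀ d : Fin n →₀ ℕ,
      ((monomial d (1:k) ∈ I) ↔ ∃ i : Fin n, Finsupp.single i (m i) ≤ d) := by
    intro d
    have h1 : I = Ideal.span ((fun s => monomial s (1:k)) ''
        (Set.range fun i : Fin n => Finsupp.single i (m i))) := by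
      rw [hI, ← Set.range_comp]
      congr 1 with p
      simp [X_pow_eq_monomial, Function.comp]
    rw [h1, mem_ideal_span_monomial_image]
    simp [support_monomial]
  have hXpow : ∀ (t : Fin n) (e : ℕ),
      ((X t : MvPolynomial (Fin n) k) ^ e ∈ I ↔ m t ≤ e) := by
    intro t e
    rw [X_pow_eq_monomial, key]
    constructor
    · rintro ⟨i, hi⟩
      rcases eq_or_ne i t with rfl | hne
      · simpa using (Finsupp.single_le_iff.mp hi)
      · have := Finsupp.single_le_iff.mp hi
        rw [Finsupp.single_apply, if_neg (by simpa [eq_comm] using hne)] at this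
        have := hm i
        omega
    · intro h
      exact ⟨t, Finsupp.single_le_iff.mpr (by simpa using h)⟩
  constructor
  · rintro ⟨t, h2, h3, hmul⟩
    have hmt3 : m t ≤ 3 := (hXpow t 3).mp h3
    have hmt2 : ¬ m t ≤ 2 := fun h => h2 ((hXpow t 2).mpr h)
    have hn1 : n = 1 := by
      by_contra hne
      have hn2 : 2 ≤ n := by omega
      have : Nontrivial (Fin n) := Fin.nontrivial_iff_two_le.mpr hn2
      obtain ⟨i, hi⟩ := exists_ne t
      have hmem := hmul i hi
      have : (X i : MvPolynomial (Fin n) k) * X t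
          = monomial (Finsupp.single i 1 + Finsupp.single t 1) (1:k) := by
        rw [monomial_add_single]
        simp [X]
      rw [this, key] at hmem
      obtain ⟨j, hj⟩ := hmem
      have hj' := Finsupp.single_le_iff.mp hj
      have hval : (Finsupp.single i 1 + Finsupp.single t 1 : Fin n →₀ ℕ) j ≤ 1 := by
        simp only [Finsupp.add_apply, Finsupp.single_apply]
        split_ifs with hij htj
        · exact absurd (hij.trans htj.symm) hi
        · omega
        · omega
        · omega
      have := hm j
      omega
    subst hn1
    refine ⟨rfl, fun i => ?_⟩
    have hit : i = t := Subsingleton.elim i t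
    subst hit
    omega
  · rintro ⟨hn1, hm3⟩
    subst hn1
    refine ⟨0, ?_, ?_, ?_⟩
    · intro h
      have := (hXpow 0 2).mp h
      rw [hm3 0] at this; omega
    · exact (hXpow 0 3).mpr (by rw [hm3 0])
    · intro i hi
      exact absurd (Subsingleton.elim i 0) hi
end

section
/- Let I be a monomial ideal of A with M(I) finite. For every nonzero exponent vector p, one has X^p ∉ I if and only if there exists a truly isolated vertex a ∈ M(I) with p ≤ a componentwise (equivalently, X^p divides X^a). That is, the points of the survival complex are exactly the nontrivial monomial factors of its truly isolated points. -/
/-!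
An ideal containing `X^a` contains every multiple of it, so every factor of a survivor
survives. Conversely, the finitely many survivors above `X^p` contain a maximal one `a`; for
each `i`, `X_i · X^a` lies strictly above `a`, so it cannot survive, i.e. `a` is truly isolated.
-/

open MvPolynomial

/-- A vertex `a ∈ M(I)` is *truly isolated* if `X_i · X^a ∈ I` for every `i`. -/
def TrulyIsolated {k : Type*} [Field k] {n : ℕ}
    (I : Ideal (MvPolynomial (Fin n) k)) (a : (Fin n) →₀ ℕ) : Prop :=
  ∀ i : Fin n, X i * monomial a (1 : k) ∈ I

theorem MvPolynomial.monomial_one_mem_of_le {σ R : Type*} [CommSemiring R]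
    {I : Ideal (MvPolynomial σ R)} {a b : σ →₀ ℕ} (hab : a ≤ b)
    (ha : monomial a (1 : R) ∈ I) : monomial b (1 : R) ∈ I :=
  I.mem_of_dvd (monomial_dvd_monomial.mpr ⟨Or.inr hab, dvd_rfl⟩) ha

theorem trulyIsolated_of_maximal {k : Type*} [Field k] {n : ℕ}
    {I : Ideal (MvPolynomial (Fin n) k)} {a : (Fin n) →₀ ℕ}
    (ha : Maximal (· ∈ survivors I) a) : TrulyIsolated I a := by
  intro i
  by_contra hi
  rw [← pow_one (X i), ← monomial_single_add] at hi
  have hlt : a < Finsupp.single i 1 + a :=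
    lt_add_of_pos_left a (pos_iff_ne_zero.mpr (Finsupp.single_ne_zero.mpr one_ne_zero))
  exact ha.not_gt ⟨fun h => ha.prop.1 (add_eq_zero.mp h).2, hi⟩ hlt

theorem survivor_iff_factor_of_truly_isolated_general
    {k : Type*} [Field k] {n : ℕ}
    (I : Ideal (MvPolynomial (Fin n) k))
    (hfin : (survivors I).Finite)
    (p : (Fin n) →₀ ℕ) (hp : p ≠ 0) :
    monomial p (1 : k) ∉ I ↔
      ∃ a ∈ survivors I, TrulyIsolated I a ∧ ∀ i : Fin n, p i ≤ a i := by
  constructor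
  · intro hpI
    obtain ⟨a, hpa, ha⟩ := hfin.exists_le_maximal (show p ∈ survivors I from ⟨hp, hpI⟩)
    exact ⟨a, ha.prop, trulyIsolated_of_maximal ha, hpa⟩
  · rintro ⟨a, ⟨-, haI⟩, -, hpa⟩ hpI
    exact haI (monomial_one_mem_of_le (Finsupp.le_def.mpr hpa) hpI)

/-- The points of the survival complex are exactly the nontrivial monomial
factors of its truly isolated points. -/
theorem survivor_iff_factor_of_truly_isolated
    {k : Type*} [Field k] {n : ℕ} (hn : 1 ≤ n)
    (I : Ideal (MvPolynomial (Fin n) k)) (hI : IsMonomialIdeal I)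
    (hfin : (survivors I).Finite)
    (p : (Fin n) →₀ ℕ) (hp : p ≠ 0) :
    monomial p (1 : k) ∉ I ↔
      ∃ a ∈ survivors I, TrulyIsolated I a ∧ ∀ i : Fin n, p i ≤ a i :=
  survivor_iff_factor_of_truly_isolated_general I hfin p hp
end

section
/- Let I be a monomial ideal of A with M(I) finite, and let a, b ∈ M(I) be vertices that are not reachable from one another in G(I), each of which lies in a nontrivial or quasi-trivially connected component, i.e. each of a and b either is adjacent to some vertex of G(I), or equals e_t for some t with X_t^2 ∉ I. Say that a variable i is involved in the component of a vertex v if X_i·X^{v'} ∉ I for some vertex v' reachable from v in G(I). Then no variable is involved in both the component of a and the component of b: the two components have no variables in common. -/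
open MvPolynomial

/-- The survival graph `G(I)`: distinct vertices `a, b ∈ M(I)` are adjacent iff
`X^{a+b} ∉ I` (the 1-skeleton of the survival complex). -/
def survGraph {k : Type*} [Field k] {n : ℕ}
    (I : Ideal (MvPolynomial (Fin n) k)) : SimpleGraph ((Fin n) →₀ ℕ) where
  Adj a b := a ≠ b ∧ a ∈ survivors I ∧ b ∈ survivors I ∧ monomial (a + b) (1 : k) ∉ I
  symm := by
    constructor
    rintro a b ⟨h1, h2, h3, h4⟩
    exact ⟨h1.symm, h3, h2, by rwa [add_comm]⟩
  loopless := by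
    constructor
    rintro a ⟨h1, -⟩
    exact h1 rfl

/-- Variable `i` is involved in the connected component of the vertex `v`:
`X_i · X^{v'} ∉ I` for some vertex `v'` reachable from `v` in `G(I)`. -/
def InvolvedIn {k : Type*} [Field k] {n : ℕ}
    (I : Ideal (MvPolynomial (Fin n) k)) (i : Fin n) (v : (Fin n) →₀ ℕ) : Prop :=
  ∃ v' ∈ survivors I, (survGraph I).Reachable v v' ∧
    X i * monomial v' (1 : k) ∉ I

/-! If `X_i · X^v ∉ I` for a vertex `v`, then `e_i` is a vertex and `v` is `e_i` or adjacent to it.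
So a variable involved in a component puts `e_i` into that component, and two components
involving the same variable meet at `e_i`. -/

section

variable {k : Type*} [Field k] {n : ℕ} {I : Ideal (MvPolynomial (Fin n) k)}

lemma X_mul_monomial_one (i : Fin n) (v : (Fin n) →₀ ℕ) :
    X i * monomial v (1 : k) = monomial (Finsupp.single i 1 + v) 1 := by
  rw [monomial_single_add, pow_one]

lemma single_mem_survivors_of_X_mul_notMem {i : Fin n} {v : (Fin n) →₀ ℕ}
    (h : X i * monomial v (1 : k) ∉ I) : Finsupp.single i 1 ∈ survivors I := by
  refine ⟨by simp, fun hi => h ?_⟩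
  rw [← pow_one (X i), X_pow_eq_monomial]
  exact I.mul_mem_right _ hi

lemma survGraph_reachable_single_of_X_mul_notMem {i : Fin n} {v : (Fin n) →₀ ℕ}
    (hv : v ∈ survivors I) (h : X i * monomial v (1 : k) ∉ I) :
    (survGraph I).Reachable v (Finsupp.single i 1) := by
  by_cases hvi : v = Finsupp.single i 1
  · exact hvi ▸ SimpleGraph.Reachable.refl _
  · refine SimpleGraph.Adj.reachable
      ⟨hvi, hv, single_mem_survivors_of_X_mul_notMem h, ?_⟩
    rwa [add_comm, ← X_mul_monomial_one]

lemma InvolvedIn.reachable_single {i : Fin n} {v : (Fin n) →₀ ℕ} (h : InvolvedIn I i v) :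
    (survGraph I).Reachable v (Finsupp.single i 1) :=
  let ⟨_, hv', hreach, hi⟩ := h
  hreach.trans (survGraph_reachable_single_of_X_mul_notMem hv' hi)

end

theorem components_share_no_variables_general
    {k : Type*} [Field k] {n : ℕ}
    (I : Ideal (MvPolynomial (Fin n) k))
    (a b : (Fin n) →₀ ℕ)
    (hsep : ¬ (survGraph I).Reachable a b) :
    ¬ ∃ i : Fin n, InvolvedIn I i a ∧ InvolvedIn I i b := by
  rintro ⟨i, hia, hib⟩
  exact hsep (hia.reachable_single.trans hib.reachable_single.symm)

/-- Two distinct nontrivial or quasi-trivially connected components of the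
survival complex have no variables in common. -/
theorem components_share_no_variables
    {k : Type*} [Field k] {n : ℕ} (hn : 1 ≤ n)
    (I : Ideal (MvPolynomial (Fin n) k)) (hI : IsMonomialIdeal I)
    (hfin : (survivors I).Finite)
    (a b : (Fin n) →₀ ℕ) (ha : a ∈ survivors I) (hb : b ∈ survivors I)
    (hsep : ¬ (survGraph I).Reachable a b)
    (hanontriv : (∃ v, (survGraph I).Adj a v) ∨
      ∃ t : Fin n, a = Finsupp.single t 1 ∧
        monomial (Finsupp.single t 2) (1 : k) ∉ I)
    (hbnontriv : (∃ v, (survGraph I).Adj b v) ∨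
      ∃ t : Fin n, b = Finsupp.single t 1 ∧
        monomial (Finsupp.single t 2) (1 : k) ∉ I) :
    ¬ ∃ i : Fin n, InvolvedIn I i a ∧ InvolvedIn I i b :=
  components_share_no_variables_general I a b hsep
end

section
/- Let I be a proper monomial ideal of A with M(I) finite and with X_i ∉ I for every i, and suppose Fin n is partitioned into nonempty sets V_1,…,V_m such that X_i·X_j ∈ I whenever i and j lie in different parts. For each t, let R_t = A/(I + (X_j : j ∉ V_t)), and let ε_t : R_t → A/(X_1,…,X_n) be the natural quotient map. Then the natural ring homomorphism A/I → ∏_{t=1}^m R_t is injective, and its image is the fibre product subring {(r_1,…,r_m) : ε_s(r_s) = ε_t(r_t) for all s, t}; in particular A/I is ring-isomorphic to this fibre product of the m rings R_1,…,R_m. -/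
open MvPolynomial

/-- The homogeneous maximal ideal `(X_1,…,X_n)` of `A`. -/
noncomputable def maxIdeal (k : Type*) [Field k] (n : ℕ) : Ideal (MvPolynomial (Fin n) k) :=
  Ideal.span (Set.range (X : Fin n → MvPolynomial (Fin n) k))

/-- The ideal `I + (X_j : j ∉ V)` defining the factor `R_t` associated to a
part `V` of the variables. -/
noncomputable def componentIdeal {k : Type*} [Field k] {n : ℕ}
    (I : Ideal (MvPolynomial (Fin n) k)) (V : Set (Fin n)) :
    Ideal (MvPolynomial (Fin n) k) :=
  I ⊔ Ideal.span ((fun j => (X j : MvPolynomial (Fin n) k)) '' Vᶜ)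

/-!
A monomial `X^a` involving variables from two different parts is divisible by some
`X_i X_j ∈ I`, while one involving only variables of `V_t` lies in `I + (X_j : j ∉ V_t)` exactly
when it lies in `I`. Since `I` and the `I + (X_j : j ∉ V_t)` are monomial ideals, this gives
`⋂_t (I + (X_j : j ∉ V_t)) = I`, i.e. injectivity. A tuple of residues with a common image in
`k` lifts to the common constant term plus, for each `t`, the terms of a lift of the `t`-th
entry whose exponent is nonzero and supported in `V_t`.
-/

open Function

theorem Ideal.injective_pi_factor {R ι : Type*} [CommRing R] {I : Ideal R} {J : ι → Ideal R}
    (hIJ : ∀ t, I ≤ J t) (hJ : ⨅ t, J t ≤ I) :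
    Injective (RingHom.pi fun t => Ideal.Quotient.factor (hIJ t)) := by
  rw [injective_iff_map_eq_zero]
  intro x hx
  obtain ⟨p, rfl⟩ := Ideal.Quotient.mk_surjective x
  refine Ideal.Quotient.eq_zero_iff_mem.2 (hJ (Ideal.mem_iInf.2 fun t => ?_))
  have ht := congrFun hx t
  rwa [RingHom.pi_apply, Ideal.Quotient.factor_mk, Pi.zero_apply,
    Ideal.Quotient.eq_zero_iff_mem] at ht

namespace MvPolynomial

variable {σ R : Type*}

section CommSemiring

variable [CommSemiring R]

theorem monomial_one_mem_of_le_s8 {I : Ideal (MvPolynomial σ R)} {a b : σ →₀ ℕ} (hab : a ≤ b)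
    (ha : monomial a (1 : R) ∈ I) : monomial b (1 : R) ∈ I :=
  Ideal.mem_of_dvd _ (monomial_dvd_monomial.2 ⟨Or.inr hab, one_dvd _⟩) ha

theorem monomial_one_mem_of_X_mul_X_mem {I : Ideal (MvPolynomial σ R)} {a : σ →₀ ℕ} {i j : σ}
    (hij : i ≠ j) (hi : i ∈ a.support) (hj : j ∈ a.support) (hX : X i * X j ∈ I) :
    monomial a (1 : R) ∈ I := by
  classical
  rw [X, X, monomial_mul, one_mul] at hX
  refine monomial_one_mem_of_le_s8 (fun l => ?_) hX
  rw [Finsupp.mem_support_iff] at hi hj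
  simp only [Finsupp.add_apply, Finsupp.single_apply]
  split_ifs with hil hjl
  · exact absurd (hil.trans hjl.symm) hij
  all_goals subst_vars; omega

theorem coeff_sum_support_filter_monomial (P : (σ →₀ ℕ) → Prop) [DecidablePred P]
    (p : MvPolynomial σ R) (b : σ →₀ ℕ) :
    coeff b (∑ a ∈ p.support with P a, monomial a (coeff a p)) =
      if P b then coeff b p else 0 := by
  classical
  rw [coeff_sum]
  simp_rw [coeff_monomial]
  rw [Finset.sum_ite_eq']
  by_cases hP : P b <;> by_cases hb : coeff b p = 0 <;> simp [hP, hb]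

end CommSemiring

theorem exists_sub_mem_span_X_compl [CommRing R] {ι : Type*} [Fintype ι] {V : ι → Set σ}
    (hV : Pairwise (Disjoint on V)) (f : ι → MvPolynomial σ R)
    (hf : ∀ s t, coeff 0 (f s) = coeff 0 (f t)) :
    ∃ F : MvPolynomial σ R, ∀ t, F - f t ∈ Ideal.span (X '' (V t)ᶜ) := by
  classical
  obtain ⟨c, hc⟩ : ∃ c, ∀ t, coeff 0 (f t) = c := by
    rcases isEmpty_or_nonempty ι with hι | ⟨⟨t₀⟩⟩
    · exact ⟨0, isEmptyElim⟩
    · exact ⟨_, fun t => hf t t₀⟩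
  let P : ι → (σ →₀ ℕ) → Prop := fun t a => a ≠ 0 ∧ ↑a.support ⊆ V t
  refine ⟨C c + ∑ t, ∑ a ∈ (f t).support with P t a, monomial a (coeff a (f t)), fun t => ?_⟩
  rw [mem_ideal_span_X_image]
  intro b hb
  by_contra! hbV
  refine mem_support_iff.1 hb ?_
  replace hbV : ↑b.support ⊆ V t := fun i hi => by
    by_contra h
    exact Finsupp.mem_support_iff.1 hi (hbV i h)
  rw [coeff_sub, coeff_add, coeff_C, coeff_sum]
  simp only [coeff_sum_support_filter_monomial]
  rcases eq_or_ne b 0 with rfl | hb0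
  · simp [P, hc]
  · have hPs : ∀ s, P s b ↔ s = t := fun s => by
      refine ⟨fun hs => ?_, fun h => h ▸ ⟨hb0, hbV⟩⟩
      by_contra hst
      obtain ⟨i, hi⟩ := Finsupp.support_nonempty_iff.2 hb0
      exact Set.disjoint_left.1 (hV hst) (hs.2 hi) (hbV hi)
    simp [hPs, hb0.symm]

end MvPolynomial

section

variable {k : Type*} [Field k] {n : ℕ}

theorem mem_maxIdeal_iff {p : MvPolynomial (Fin n) k} :
    p ∈ maxIdeal k n ↔ coeff 0 p = 0 := by
  rw [maxIdeal, ← Set.image_univ, mem_ideal_span_X_image, ← notMem_support_iff]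
  constructor
  · intro h h0
    obtain ⟨i, -, hi⟩ := h 0 h0
    exact hi rfl
  · intro h a ha
    obtain ⟨i, hi⟩ := Finsupp.ne_iff.1 (ne_of_mem_of_not_mem ha h)
    exact ⟨i, Set.mem_univ i, hi⟩

theorem componentIdeal_span_monomial (S : Set (Fin n →₀ ℕ)) (V : Set (Fin n)) :
    componentIdeal (Ideal.span ((fun a => monomial a (1 : k)) '' S)) V =
      Ideal.span ((fun a => monomial a (1 : k)) '' (S ∪ (fun j => Finsupp.single j 1) '' Vᶜ)) := by
  rw [componentIdeal, Set.image_union, Ideal.span_union, Set.image_image]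
  rfl

variable {I : Ideal (MvPolynomial (Fin n) k)}

theorem isMonomialIdeal_componentIdeal (hI : IsMonomialIdeal I) (V : Set (Fin n)) :
    IsMonomialIdeal (componentIdeal I V) := by
  obtain ⟨S, rfl⟩ := hI
  exact ⟨_, componentIdeal_span_monomial S V⟩

namespace IsMonomialIdeal

theorem mem_iff (hI : IsMonomialIdeal I) {p : MvPolynomial (Fin n) k} :
    p ∈ I ↔ ∀ a ∈ p.support, monomial a (1 : k) ∈ I := by
  classical
  obtain ⟨S, rfl⟩ := hI
  simp [mem_ideal_span_monomial_image]

theorem le_maxIdeal (hI : IsMonomialIdeal I) (hproper : I ≠ ⊤) : I ≤ maxIdeal k n := by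
  intro p hp
  rw [mem_maxIdeal_iff, ← notMem_support_iff]
  intro h0
  refine hproper ((Ideal.eq_top_iff_one _).2 ?_)
  simpa using hI.mem_iff.1 hp 0 h0

theorem componentIdeal_le_maxIdeal (hI : IsMonomialIdeal I) (hproper : I ≠ ⊤)
    (V : Set (Fin n)) : componentIdeal I V ≤ maxIdeal k n :=
  sup_le (hI.le_maxIdeal hproper) (Ideal.span_mono (Set.image_subset_range _ _))

theorem monomial_mem_componentIdeal_iff (hI : IsMonomialIdeal I) {V : Set (Fin n)}
    {a : Fin n →₀ ℕ} (ha : ↑a.support ⊆ V) :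
    monomial a (1 : k) ∈ componentIdeal I V ↔ monomial a (1 : k) ∈ I := by
  refine ⟨fun h => ?_, fun h => Ideal.mem_sup_left h⟩
  obtain ⟨S, rfl⟩ := hI
  rw [componentIdeal_span_monomial, mem_ideal_span_monomial_image] at h
  obtain ⟨s, hs | ⟨j, hj, rfl⟩, hsa⟩ := h a (by simp)
  · exact monomial_one_mem_of_le_s8 hsa (Ideal.subset_span ⟨s, hs, rfl⟩)
  · refine absurd (ha (Finsupp.mem_support_iff.2 ?_)) hj
    have := Finsupp.single_le_iff.1 hsa
    omega

theorem iInf_componentIdeal_le (hI : IsMonomialIdeal I) {ι : Type*} [Nonempty ι]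
    {V : ι → Set (Fin n)} (hVcover : ⋃ t, V t = Set.univ)
    (hcross : ∀ s t, s ≠ t → ∀ i ∈ V s, ∀ j ∈ V t, (X i : MvPolynomial (Fin n) k) * X j ∈ I) :
    ⨅ t, componentIdeal I (V t) ≤ I := by
  have hcover : ∀ i, ∃ t, i ∈ V t := fun i => Set.mem_iUnion.1 (hVcover ▸ Set.mem_univ i)
  intro p hp
  refine hI.mem_iff.2 fun a ha => ?_
  have hmem : ∀ t, monomial a (1 : k) ∈ componentIdeal I (V t) := fun t =>
    (isMonomialIdeal_componentIdeal hI _).mem_iff.1 (Ideal.mem_iInf.1 hp t) a ha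
  by_cases hpart : ∃ t, ↑a.support ⊆ V t
  · obtain ⟨t, ht⟩ := hpart
    exact (hI.monomial_mem_componentIdeal_iff ht).1 (hmem t)
  -- otherwise `a` involves variables `i ∈ V s` and `j ∉ V s`, and `X i * X j ∈ I`
  push Not at hpart
  obtain ⟨i, hia, -⟩ := Set.not_subset.1 (hpart (Classical.arbitrary ι))
  obtain ⟨s, his⟩ := hcover i
  obtain ⟨j, hja, hjs⟩ := Set.not_subset.1 (hpart s)
  obtain ⟨t, hjt⟩ := hcover j
  exact monomial_one_mem_of_X_mul_X_mem (by rintro rfl; exact hjs his) hia hja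
    (hcross s t (by rintro rfl; exact hjs hjt) i his j hjt)

end IsMonomialIdeal

theorem range_pi_factor_componentIdeal {ι : Type*} [Fintype ι] {V : ι → Set (Fin n)}
    (hV : Pairwise (Disjoint on V)) (hle : ∀ t, componentIdeal I (V t) ≤ maxIdeal k n) :
    Set.range (RingHom.pi fun t =>
        Ideal.Quotient.factor (le_sup_left : I ≤ componentIdeal I (V t))) =
      {r | ∀ s t, Ideal.Quotient.factor (hle s) (r s) = Ideal.Quotient.factor (hle t) (r t)} := by
  ext r
  constructor
  · rintro ⟨x, rfl⟩ s t
    obtain ⟨p, rfl⟩ := Ideal.Quotient.mk_surjective x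
    exact (Ideal.Quotient.factor_mk _ p).trans (Ideal.Quotient.factor_mk _ p).symm
  · intro hr
    choose f hf using fun t => Ideal.Quotient.mk_surjective (I := componentIdeal I (V t)) (r t)
    have hconst : ∀ s t, coeff 0 (f s) = coeff 0 (f t) := fun s t => by
      have hst := hr s t
      rw [← hf s, ← hf t, Ideal.Quotient.factor_mk, Ideal.Quotient.factor_mk,
        Ideal.Quotient.eq, mem_maxIdeal_iff, coeff_sub] at hst
      exact sub_eq_zero.1 hst
    obtain ⟨F, hF⟩ := exists_sub_mem_span_X_compl hV f hconst
    refine ⟨Ideal.Quotient.mk I F, funext fun t => ?_⟩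
    rw [RingHom.pi_apply, Ideal.Quotient.factor_mk, ← hf t]
    exact Ideal.Quotient.eq.2 (Ideal.mem_sup_right (hF t))

end

theorem fibre_product_decomposition_general
    {k : Type*} [Field k] {n m : ℕ} (hn : 1 ≤ n)
    (I : Ideal (MvPolynomial (Fin n) k)) (hI : IsMonomialIdeal I)
    (hproper : I ≠ ⊤)
    (V : Fin m → Set (Fin n))
    (hVdisj : ∀ s t : Fin m, s ≠ t → Disjoint (V s) (V t))
    (hVcover : (⋃ t, V t) = Set.univ)
    (hcross : ∀ s t : Fin m, s ≠ t → ∀ i ∈ V s, ∀ j ∈ V t,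
      (X i : MvPolynomial (Fin n) k) * X j ∈ I) :
    Function.Injective
        (Pi.ringHom fun t : Fin m =>
          Ideal.Quotient.factor (le_sup_left : I ≤ componentIdeal I (V t))) ∧
      ∃ ε : ∀ t : Fin m,
          (MvPolynomial (Fin n) k ⧸ componentIdeal I (V t)) →+*
            (MvPolynomial (Fin n) k ⧸ maxIdeal k n),
        (∀ t : Fin m, (ε t).comp (Ideal.Quotient.mk (componentIdeal I (V t))) =
          Ideal.Quotient.mk (maxIdeal k n)) ∧
        Set.range (Pi.ringHom fun t : Fin m =>
            Ideal.Quotient.factor (le_sup_left : I ≤ componentIdeal I (V t))) =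
          {r : ∀ t : Fin m, MvPolynomial (Fin n) k ⧸ componentIdeal I (V t) |
            ∀ s t : Fin m, ε s (r s) = ε t (r t)} := by
  have : Nonempty (Fin m) := by
    obtain ⟨t, -⟩ := Set.mem_iUnion.1 (hVcover ▸ Set.mem_univ (⟨0, hn⟩ : Fin n))
    exact ⟨t⟩
  exact ⟨Ideal.injective_pi_factor _ (hI.iInf_componentIdeal_le hVcover hcross),
    fun t => Ideal.Quotient.factor (hI.componentIdeal_le_maxIdeal hproper (V t)),
    fun t => Ideal.Quotient.factor_comp_mk _,
    range_pi_factor_componentIdeal (fun s t => hVdisj s t) _⟩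

/-- If the variables are partitioned into parts `V_1,…,V_m` whose pairwise
cross-products of variables lie in `I`, then `A/I` is the fibre product over
`k` of the rings `R_t = A/(I + (X_j : j ∉ V_t))`: the natural map
`A/I → ∏_t R_t` is injective with image the tuples whose residues agree. -/
theorem fibre_product_decomposition
    {k : Type*} [Field k] {n m : ℕ} (hn : 1 ≤ n)
    (I : Ideal (MvPolynomial (Fin n) k)) (hI : IsMonomialIdeal I)
    (hproper : I ≠ ⊤) (hfin : (survivors I).Finite)
    (hX : ∀ i : Fin n, (X i : MvPolynomial (Fin n) k) ∉ I)
    (V : Fin m → Set (Fin n))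
    (hVne : ∀ t, (V t).Nonempty)
    (hVdisj : ∀ s t : Fin m, s ≠ t → Disjoint (V s) (V t))
    (hVcover : (⋃ t, V t) = Set.univ)
    (hcross : ∀ s t : Fin m, s ≠ t → ∀ i ∈ V s, ∀ j ∈ V t,
      (X i : MvPolynomial (Fin n) k) * X j ∈ I) :
    Function.Injective
        (Pi.ringHom fun t : Fin m =>
          Ideal.Quotient.factor (le_sup_left : I ≤ componentIdeal I (V t))) ∧
      ∃ ε : ∀ t : Fin m,
          (MvPolynomial (Fin n) k ⧸ componentIdeal I (V t)) →+*
            (MvPolynomial (Fin n) k ⧸ maxIdeal k n),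
        (∀ t : Fin m, (ε t).comp (Ideal.Quotient.mk (componentIdeal I (V t))) =
          Ideal.Quotient.mk (maxIdeal k n)) ∧
        Set.range (Pi.ringHom fun t : Fin m =>
            Ideal.Quotient.factor (le_sup_left : I ≤ componentIdeal I (V t))) =
          {r : ∀ t : Fin m, MvPolynomial (Fin n) k ⧸ componentIdeal I (V t) |
            ∀ s t : Fin m, ε s (r s) = ε t (r t)} :=
  fibre_product_decomposition_general hn I hI hproper V hVdisj hVcover hcross
end

section
/- Let I be a proper monomial ideal of A with M(I) finite and with X_i ∉ I for every i. Then the survival complex of A/I has exactly one truly isolated point if and only if I is a pure power ideal, i.e. if and only if there exists m : Fin n → ℕ with m_i ≥ 2 for all i such that I is the ideal generated by X_1^{m_1},…,X_n^{m_n}. -/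
open MvPolynomial

lemma mono_mem_of_le {k : Type*} [Field k] {n : ℕ}
    {I : Ideal (MvPolynomial (Fin n) k)} {s t : (Fin n) →₀ ℕ} (h : s ≤ t)
    (hs : (monomial s (1 : k) : MvPolynomial (Fin n) k) ∈ I) :
    (monomial t (1 : k) : MvPolynomial (Fin n) k) ∈ I := by
  have : (monomial t (1 : k) : MvPolynomial (Fin n) k)
      = monomial (t - s) 1 * monomial s 1 := by
    rw [monomial_mul, one_mul, tsub_add_cancel_of_le h]
  rw [this]
  exact Ideal.mul_mem_left _ _ hs

lemma X_mul_mono {k : Type*} [Field k] {n : ℕ} (i : Fin n) (b : (Fin n) →₀ ℕ) :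
    (X i : MvPolynomial (Fin n) k) * monomial b 1
      = monomial (Finsupp.single i 1 + b) 1 := by
  rw [X, monomial_mul, one_mul]

/-- The survival complex of `A/I` has exactly one truly isolated point if and
only if `I` is a pure power ideal `(X_1^{m_1},…,X_n^{m_n})` with all `m_i ≥ 2`. -/
theorem unique_truly_isolated_iff_purePower
    {k : Type*} [Field k] {n : ℕ} (hn : 1 ≤ n)
    (I : Ideal (MvPolynomial (Fin n) k)) (hI : IsMonomialIdeal I)
    (hproper : I ≠ ⊤) (hfin : (survivors I).Finite)
    (hX : ∀ i : Fin n, (X i : MvPolynomial (Fin n) k) ∉ I) :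
    (∃! a : (Fin n) →₀ ℕ, a ∈ survivors I ∧
        ∀ i : Fin n, X i * monomial a (1 : k) ∈ I) ↔
      ∃ m : Fin n → ℕ, (∀ i, 2 ≤ m i) ∧
        I = Ideal.span (Set.range fun i : Fin n =>
          (X i : MvPolynomial (Fin n) k) ^ m i) := by
  constructor
  · rintro ⟨a, ⟨⟨ha0, haI⟩, hiso⟩, huniq⟩
    -- degree bound
    obtain ⟨N, hN⟩ := (hfin.image (fun b => ∑ j, b j)).bddAbove
    have hN' : ∀ b ∈ survivors I, (∑ j, b j) ≤ N := fun b hb =>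
      hN (Set.mem_image_of_mem _ hb)
    -- step lemma: from a non-truly-isolated survivor get a bigger survivor
    have step : ∀ b ∈ survivors I, (¬ ∀ i : Fin n, X i * monomial b (1:k) ∈ I) →
        ∃ i : Fin n, Finsupp.single i 1 + b ∈ survivors I := by
      intro b hb h
      push_neg at h
      obtain ⟨i, hi⟩ := h
      refine ⟨i, ?_, ?_⟩
      · intro h0
        have := DFunLike.congr_fun h0 i
        simp [Finsupp.single_apply] at this
      · rwa [X_mul_mono] at hi
    have degadd : ∀ (i : Fin n) (b : (Fin n) →₀ ℕ),
        (∑ j, (Finsupp.single i 1 + b : (Fin n) →₀ ℕ) j) = 1 + ∑ j, b j := by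
      intro i b
      simp [Finsupp.add_apply, Finset.sum_add_distrib, Finsupp.single_apply]
    -- every survivor is ≤ a
    have key : ∀ d : ℕ, ∀ b ∈ survivors I, N ≤ (∑ j, b j) + d → b ≤ a := by
      intro d
      induction d with
      | zero =>
        intro b hb hNb
        by_cases hiso' : ∀ i : Fin n, X i * monomial b (1:k) ∈ I
        · exact le_of_eq (huniq b ⟨hb, hiso'⟩)
        · obtain ⟨i, hi⟩ := step b hb hiso'
          have := hN' _ hi
          rw [degadd] at this
          omega
      | succ d ih =>
        intro b hb hNb
        by_cases hiso' : ∀ i : Fin n, X i * monomial b (1:k) ∈ I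
        · exact le_of_eq (huniq b ⟨hb, hiso'⟩)
        · obtain ⟨i, hi⟩ := step b hb hiso'
          have hle := ih _ hi (by rw [degadd]; omega)
          calc b ≤ Finsupp.single i 1 + b := le_add_self
            _ ≤ a := hle
    have keyall : ∀ b ∈ survivors I, b ≤ a := by
      intro b hb
      exact key (N - ∑ j, b j) b hb (by omega)
    -- a_i ≥ 1
    have ha1 : ∀ i : Fin n, 1 ≤ a i := by
      intro i
      have hei : Finsupp.single i 1 ∈ survivors I := by
        refine ⟨by simp, ?_⟩
        rw [← X]
        exact hX i
      have := keyall _ hei i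
      simpa [Finsupp.single_apply] using this
    refine ⟨fun i => a i + 1, fun i => by show 2 ≤ a i + 1; have := ha1 i; omega, ?_⟩
    obtain ⟨S, hS⟩ := hI
    apply le_antisymm
    · rw [hS, Ideal.span_le]
      rintro _ ⟨s, hsS, rfl⟩
      show (monomial s (1:k) : MvPolynomial (Fin n) k) ∈
        Ideal.span (Set.range fun i : Fin n =>
          (X i : MvPolynomial (Fin n) k) ^ (a i + 1))
      by_cases hsa : ∃ i : Fin n, a i + 1 ≤ s i
      · obtain ⟨i, hi⟩ := hsa
        have hle : Finsupp.single i (a i + 1) ≤ s := by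
          rw [Finsupp.single_le_iff]; exact hi
        have : (monomial s (1:k) : MvPolynomial (Fin n) k)
            = monomial (s - Finsupp.single i (a i + 1)) 1
              * (X i ^ (a i + 1)) := by
          rw [X_pow_eq_monomial, monomial_mul, one_mul, tsub_add_cancel_of_le hle]
        rw [this]
        exact Ideal.mul_mem_left _ _
          (Ideal.subset_span ⟨i, rfl⟩)
      · push_neg at hsa
        exfalso
        apply haI
        apply mono_mem_of_le (s := s)
        · intro j; exact Nat.le_of_lt_succ (Nat.lt_succ_of_le (Nat.le_of_lt_succ (by
            have := hsa j; omega)))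
        · rw [hS]
          exact Ideal.subset_span ⟨s, hsS, rfl⟩
    · rw [Ideal.span_le]
      rintro _ ⟨i, rfl⟩
      by_contra hmem
      have hb : Finsupp.single i (a i + 1) ∈ survivors I := by
        refine ⟨by simp, ?_⟩
        rwa [← X_pow_eq_monomial]
      have := keyall _ hb i
      simp [Finsupp.single_apply] at this
  · rintro ⟨m, hm2, rfl⟩
    -- membership characterization
    have hrange : (Set.range fun i : Fin n => (X i : MvPolynomial (Fin n) k) ^ m i)
        = (fun s => (monomial s (1:k) : MvPolynomial (Fin n) k)) ''
          (Set.range fun i => Finsupp.single i (m i)) := by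
      rw [← Set.range_comp]
      apply congrArg
      funext i
      exact X_pow_eq_monomial
    have hmem : ∀ b : (Fin n) →₀ ℕ,
        (monomial b (1:k) : MvPolynomial (Fin n) k) ∈
          Ideal.span (Set.range fun i : Fin n =>
            (X i : MvPolynomial (Fin n) k) ^ m i) ↔ ∃ i, m i ≤ b i := by
      intro b
      rw [hrange, mem_ideal_span_monomial_image]
      classical
      rw [support_monomial, if_neg (one_ne_zero : (1:k) ≠ 0)]
      simp only [Finset.mem_singleton, forall_eq]
      constructor
      · rintro ⟨_, ⟨i, rfl⟩, h⟩
        exact ⟨i, by simpa [Finsupp.single_le_iff] using h⟩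
      · rintro ⟨i, hi⟩
        exact ⟨Finsupp.single i (m i), ⟨i, rfl⟩, by rwa [Finsupp.single_le_iff]⟩
    set a : (Fin n) →₀ ℕ := Finsupp.equivFunOnFinite.symm (fun i => m i - 1) with ha
    have haval : ∀ i, a i = m i - 1 := fun i => rfl
    refine ⟨a, ⟨⟨?_, ?_⟩, ?_⟩, ?_⟩
    · intro h0
      have := DFunLike.congr_fun h0 ⟨0, hn⟩
      have h2 := hm2 ⟨0, hn⟩
      rw [haval, Finsupp.zero_apply] at this
      omega
    · rw [hmem]
      rintro ⟨i, hi⟩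
      rw [haval] at hi
      have := hm2 i
      omega
    · intro i
      rw [X_mul_mono, hmem]
      refine ⟨i, ?_⟩
      rw [Finsupp.add_apply, Finsupp.single_apply, if_pos rfl, haval]
      have := hm2 i
      omega
    · rintro b ⟨⟨hb0, hbI⟩, hbiso⟩
      rw [hmem] at hbI
      push_neg at hbI
      ext i
      have hi := hbiso i
      rw [X_mul_mono, hmem] at hi
      obtain ⟨j, hj⟩ := hi
      rw [Finsupp.add_apply, Finsupp.single_apply] at hj
      rw [haval]
      by_cases hji : j = i
      · subst hji
        simp at hj
        have := hbI j
        omega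
      · rw [if_neg (fun h => hji h.symm)] at hj
        simp at hj
        exact absurd hj (by have := hbI j; omega)
end

section
/- (Two-variable realization) Let X be a finite nonempty set of nonzero exponent vectors in ℕ² (monomials in x and y) that is an antichain under componentwise order, i.e. no member of X divides another. Then there exists a monomial ideal I of k[x,y] with M(I) finite such that the set of truly isolated points of the survival complex of k[x,y]/I is exactly X: { a ∈ M(I) : x·X^a ∈ I and y·X^a ∈ I } = X. -/
open MvPolynomial

/-- The truly isolated vertices of the survival complex of `A/I`. -/
def trulyIsolatedSet {k : Type*} [Field k] {n : ℕ}
    (I : Ideal (MvPolynomial (Fin n) k)) : Set ((Fin n) →₀ ℕ) :=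
  {a ∈ survivors I | ∀ i : Fin n, X i * monomial a (1 : k) ∈ I}

private lemma monomial_mem_span_iff {k : Type*} [Field k] {n : ℕ}
    (T : Set ((Fin n) →₀ ℕ)) (b : (Fin n) →₀ ℕ) :
    (monomial b (1 : k) : MvPolynomial (Fin n) k) ∈
      Ideal.span ((fun a => (monomial a (1 : k) : MvPolynomial (Fin n) k)) '' T) ↔
      ∃ t ∈ T, t ≤ b := by
  classical
  rw [mem_ideal_span_monomial_image]
  constructor
  · intro h
    exact h b (by simp [support_monomial, (one_ne_zero : (1:k) ≠ 0)])
  · intro h xi hxi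
    rw [support_monomial, if_neg (one_ne_zero : (1:k) ≠ 0)] at hxi
    simp only [Finset.mem_singleton] at hxi
    subst hxi; exact h

/-- **Two-variable realization.** Every finite nonempty antichain of nonzero
exponent vectors in two variables is the set of truly isolated points of some
survival complex over `k[x,y]`. -/
theorem two_variable_realization
    {k : Type*} [Field k]
    (S : Set ((Fin 2) →₀ ℕ)) (hfin : S.Finite) (hne : S.Nonempty)
    (h0 : ∀ a ∈ S, a ≠ 0)
    (hanti : ∀ a ∈ S, ∀ b ∈ S, a ≠ b → ¬ ∀ i : Fin 2, a i ≤ b i) :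
    ∃ I : Ideal (MvPolynomial (Fin 2) k), IsMonomialIdeal I ∧
      (survivors I).Finite ∧ trulyIsolatedSet I = S := by
  classical
  -- downward closure of S
  set D : Set ((Fin 2) →₀ ℕ) := {b | ∃ a ∈ S, b ≤ a} with hD
  set T : Set ((Fin 2) →₀ ℕ) := Dᶜ with hT
  set I : Ideal (MvPolynomial (Fin 2) k) :=
    Ideal.span ((fun a => (monomial a (1 : k) : MvPolynomial (Fin 2) k)) '' T) with hI
  have hmem : ∀ b : (Fin 2) →₀ ℕ, monomial b (1 : k) ∈ I ↔ b ∉ D := by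
    intro b
    rw [hI, monomial_mem_span_iff]
    constructor
    · rintro ⟨t, ht, htb⟩ hb
      obtain ⟨a, haS, hba⟩ := hb
      exact ht ⟨a, haS, le_trans htb hba⟩
    · intro hb
      exact ⟨b, hb, le_refl b⟩
  have hsurv : survivors I = D \ {0} := by
    ext b
    simp only [survivors, Set.mem_setOf_eq, hmem, not_not, Set.mem_diff,
      Set.mem_singleton_iff]
    tauto
  refine ⟨I, ⟨T, hI⟩, ?_, ?_⟩
  · -- finiteness
    rw [hsurv]
    apply Set.Finite.diff
    have : D = ⋃ a ∈ S, Set.Iic a := by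
      ext b; simp [hD, Set.mem_Iic]
    rw [this]
    exact hfin.biUnion (fun a _ => Set.finite_Iic a)
  · -- truly isolated = S
    ext b
    have hXmul : ∀ i : Fin 2, (X i : MvPolynomial (Fin 2) k) * monomial b 1 =
        monomial (b + Finsupp.single i 1) 1 := by
      intro i
      rw [X, monomial_mul, one_mul, add_comm]
    simp only [trulyIsolatedSet, Set.mem_setOf_eq, hsurv, Set.mem_diff,
      Set.mem_singleton_iff]
    constructor
    · rintro ⟨⟨hbD, hb0⟩, hiso⟩
      obtain ⟨a, haS, hba⟩ := hbD
      rcases eq_or_ne b a with rfl | hne'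
      · exact haS
      · exfalso
        have : ∃ i : Fin 2, b i < a i := by
          by_contra hc
          push_neg at hc
          exact hne' (le_antisymm hba (Finsupp.le_def.mpr hc))
        obtain ⟨i, hi⟩ := this
        have h1 := hiso i
        rw [hXmul i, hmem] at h1
        apply h1
        refine ⟨a, haS, ?_⟩
        intro j
        simp only [Finsupp.add_apply, Finsupp.single_apply]
        rcases eq_or_ne i j with rfl | hij
        · simpa using hi
        · simp only [if_neg hij, add_zero]
          exact hba j
    · intro hbS
      refine ⟨⟨⟨b, hbS, le_refl b⟩, h0 b hbS⟩, ?_⟩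
      intro i
      rw [hXmul i, hmem]
      rintro ⟨a, haS, hle⟩
      have hba : ∀ j, b j ≤ a j := by
        intro j
        have := hle j
        simp only [Finsupp.add_apply] at this
        omega
      rcases eq_or_ne b a with rfl | hne'
      · have := hle i
        simp [Finsupp.add_apply, Finsupp.single_apply] at this
      · exact hanti b hbS a haS hne' hba
end

section
/- (Three-variable realization) Fix an index i ∈ {1,2,3} and an integer l ≥ 1, and let Y be a finite nonempty set of exponent vectors in ℕ³ supported off the i-th coordinate (monomials in the other two variables) that is an antichain under componentwise order. Let X = { l·e_i + y : y ∈ Y }. Then there exists a monomial ideal I of k[x_1,x_2,x_3] with M(I) finite such that the set of truly isolated points of the survival complex of k[x_1,x_2,x_3]/I is exactly X: { a ∈ M(I) : x_j·X^a ∈ I for all j } = X. -/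
open MvPolynomial

lemma monomial_mem_span_monomials {k : Type*} [Field k] {n : ℕ}
    (T : Set ((Fin n) →₀ ℕ)) (a : (Fin n) →₀ ℕ) :
    (monomial a (1 : k) : MvPolynomial (Fin n) k) ∈
      Ideal.span ((fun t => (monomial t (1 : k) : MvPolynomial (Fin n) k)) '' T) ↔
    ∃ t ∈ T, t ≤ a := by
  constructor
  · intro h
    rw [Ideal.span, Submodule.mem_span_set] at h
    obtain ⟨c, hc, hsum⟩ := h
    by_contra hno
    push_neg at hno
    have h1 : coeff a (monomial a (1 : k) : MvPolynomial (Fin n) k) = 1 := by simp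
    rw [← hsum] at h1
    rw [Finsupp.sum, MvPolynomial.coeff_sum] at h1
    have : ∀ m ∈ c.support, coeff a (c m • m) = 0 := by
      intro m hm
      obtain ⟨t, ht, rfl⟩ := hc hm
      rw [smul_eq_mul, coeff_mul_monomial']
      rw [if_neg (hno t ht)]
    rw [Finset.sum_eq_zero this] at h1
    exact one_ne_zero h1.symm
  · rintro ⟨t, ht, hle⟩
    have : (monomial a (1 : k) : MvPolynomial (Fin n) k)
        = monomial (a - t) (1 : k) * monomial t (1 : k) := by
      rw [monomial_mul, one_mul, tsub_add_cancel_of_le hle]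
    rw [this]
    exact Ideal.mul_mem_left _ _ (Ideal.subset_span ⟨t, ht, rfl⟩)

/-- **Three-variable realization.** Fix an index `i` and `l ≥ 1`, and let `Y`
be a finite nonempty antichain of exponent vectors supported off the `i`-th
coordinate. Then `X = { l·e_i + y : y ∈ Y }` is the set of truly isolated
points of some survival complex over `k[x_1,x_2,x_3]`. -/
theorem three_variable_realization
    {k : Type*} [Field k] (i : Fin 3) (l : ℕ) (hl : 1 ≤ l)
    (Y : Set ((Fin 3) →₀ ℕ)) (hfin : Y.Finite) (hne : Y.Nonempty)
    (hsupp : ∀ y ∈ Y, y i = 0)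
    (hanti : ∀ a ∈ Y, ∀ b ∈ Y, a ≠ b → ¬ ∀ j : Fin 3, a j ≤ b j) :
    ∃ I : Ideal (MvPolynomial (Fin 3) k), IsMonomialIdeal I ∧
      (survivors I).Finite ∧
      trulyIsolatedSet I = (fun y => Finsupp.single i l + y) '' Y := by
  set xv : ((Fin 3) →₀ ℕ) → ((Fin 3) →₀ ℕ) := fun y => Finsupp.single i l + y with hxv
  set T : Set ((Fin 3) →₀ ℕ) := {b | ∀ y ∈ Y, ¬ b ≤ xv y} with hT
  refine ⟨Ideal.span ((fun t => (monomial t (1 : k) : MvPolynomial (Fin 3) k)) '' T),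
    ⟨T, rfl⟩, ?_, ?_⟩
  · -- finiteness of survivors
    have hsub : survivors (Ideal.span ((fun t => (monomial t (1 : k) : MvPolynomial (Fin 3) k)) '' T))
        ⊆ ⋃ y ∈ Y, Set.Iic (xv y) := by
      intro a ha
      obtain ⟨-, hmem⟩ := ha
      rw [monomial_mem_span_monomials] at hmem
      by_contra hout
      simp only [Set.mem_iUnion, Set.mem_Iic, not_exists] at hout
      exact hmem ⟨a, fun y hy => by simpa using hout y hy, le_refl a⟩
    exact Set.Finite.subset (hfin.biUnion (fun y _ => Set.finite_Iic (xv y))) hsub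
  · -- truly isolated set
    have memI : ∀ b : (Fin 3) →₀ ℕ,
        (monomial b (1 : k) : MvPolynomial (Fin 3) k) ∈
          Ideal.span ((fun t => (monomial t (1 : k) : MvPolynomial (Fin 3) k)) '' T) ↔ b ∈ T := by
      intro b
      rw [monomial_mem_span_monomials]
      constructor
      · rintro ⟨t, ht, hle⟩ y hy hby
        exact ht y hy (hle.trans hby)
      · intro hb
        exact ⟨b, hb, le_refl b⟩
    ext a
    simp only [trulyIsolatedSet, survivors, Set.mem_setOf_eq, Set.mem_image]
    have hXmul : ∀ j : Fin 3, (X j * monomial a (1 : k) : MvPolynomial (Fin 3) k)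
        = monomial (Finsupp.single j 1 + a) (1 : k) := by
      intro j
      rw [X, monomial_mul, one_mul]
    constructor
    · rintro ⟨⟨ha0, haI⟩, hiso⟩
      rw [memI] at haI
      simp only [hT, Set.mem_setOf_eq] at haI
      push_neg at haI
      obtain ⟨y, hy, hay⟩ := haI
      refine ⟨y, hy, ?_⟩
      by_contra hne'
      -- a ≤ xv y, a ≠ xv y ⇒ ∃ j, a j < (xv y) j
      have hstrict : ∃ j : Fin 3, a j < (xv y) j := by
        by_contra hno
        push_neg at hno
        exact hne' (le_antisymm hay (Finsupp.le_def.mpr hno)).symm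
      obtain ⟨j, hj⟩ := hstrict
      have := hiso j
      rw [hXmul j, memI] at this
      refine this y hy (Finsupp.le_def.mpr fun j' => ?_)
      rcases eq_or_ne j' j with rfl | hjj
      · rw [Finsupp.add_apply, Finsupp.single_eq_same]
        omega
      · simp only [Finsupp.add_apply, Finsupp.single_apply, if_neg (Ne.symm hjj)]
        simpa using Finsupp.le_def.mp hay j'
    · rintro ⟨y, hy, rfl⟩
      have hx0 : xv y ≠ 0 := by
        intro h
        have h2 : (xv y) i = l + y i := by simp [hxv, Finsupp.single_eq_same]
        rw [h] at h2
        simp at h2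
        omega
      refine ⟨⟨hx0, ?_⟩, ?_⟩
      · rw [memI]
        intro h
        exact h y hy (le_refl _)
      · intro j
        rw [hXmul j, memI]
        intro y' hy' hle
        -- single j 1 + xv y ≤ xv y'
        have hyy' : ∀ j' : Fin 3, y j' ≤ y' j' := by
          intro j'
          have h1 := Finsupp.le_def.mp hle j'
          simp only [hxv, Finsupp.add_apply, Finsupp.single_apply] at h1 ⊢
          by_cases hij : i = j' <;> simp [hij] at h1 ⊢ <;> omega
        have hyne : y ≠ y' := by
          rintro rfl
          have h1 := Finsupp.le_def.mp hle j
          simp only [Finsupp.add_apply, Finsupp.single_apply, if_pos rfl] at h1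
          by_cases hij : i = j <;> simp [hij] at h1 <;> omega
        exact hanti y hy y' hy' hyne hyy'
end
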